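/- arXiv:2201.06729 — 6 statements merged into one kernel-verified Lean document; each statement's English description precedes it below -/
import Mathlib

section
/- Let Σ be a signed graph on n vertices, let r, s, t be distinct vertices with rs a positive edge and rt a negative edge of Σ, and let Σ' be the signed graph obtained from Σ by reversing the signs of the edges rs and rt. Let X = (x_1,…,x_n)ᵀ be a unit eigenvector of A(Σ) corresponding to λ_n(A(Σ)). If x_r(x_s − x_t) ≥ 0, then λ_n(A(Σ)) ≥ λ_n(A(Σ')); moreover, if in addition x_r ≠ 0 or x_s ≠ x_t, then λ_n(A(Σ)) > λ_n(A(Σ')). -/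
/-- The least (real) eigenvalue `λₙ` of a matrix. -/
noncomputable def lambdaMin {V : Type*} [Fintype V] (M : Matrix V V ℝ) : ℝ :=
  sInf {μ : ℝ | ∃ x : V → ℝ, x ≠ 0 ∧ M.mulVec x = μ • x}

/-- `σ` is a signature for `G`: symmetric, and `±1` on every edge. -/
def EdgeSigns {V : Type*} (G : SimpleGraph V) (σ : V → V → ℝ) : Prop :=
  (∀ u v, σ u v = σ v u) ∧ ∀ u v, G.Adj u v → σ u v = 1 ∨ σ u v = -1

open scoped Classical in
/-- The adjacency matrix of the signed graph `(G, σ)`. -/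
noncomputable def signedAdj {V : Type*} (G : SimpleGraph V) (σ : V → V → ℝ) : Matrix V V ℝ :=
  fun i j => if G.Adj i j then σ i j else 0

/-!
Reversing the positive edge `rs` and the negative edge `rt` adds to `A(Σ)` the matrix
`-2(E_rs + E_sr) + 2(E_rt + E_tr)`, so the quadratic form of `A(Σ')` at `X` equals
`λₙ(A(Σ)) - 4 x_r(x_s - x_t)`, and by the Rayleigh principle `λₙ(A(Σ'))` is at most this value.
If equality held, `X` would minimise the Rayleigh quotient of `A(Σ')`, hence be an eigenvector of
`A(Σ')` for the same eigenvalue as for `A(Σ)`; comparing the `r`- and `s`-entries of `A(Σ) X` and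
`A(Σ') X` then forces `x_s = x_t` and `x_r = 0`.
-/

open Matrix

theorem Matrix.setOf_exists_mulVec_eq_smul {K V : Type*} [Field K] [Fintype V] [DecidableEq V]
    (M : Matrix V V K) : {μ : K | ∃ x : V → K, x ≠ 0 ∧ M *ᵥ x = μ • x} = spectrum K M := by
  ext μ
  rw [← spectrum_toLin', ← Module.End.hasEigenvalue_iff_mem_spectrum]
  constructor
  · rintro ⟨x, hx, hMx⟩
    exact Module.End.hasEigenvalue_of_hasEigenvector ⟨Module.End.mem_eigenspace_iff.2 hMx, hx⟩
  · intro h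
    obtain ⟨x, hx, hx0⟩ := h.exists_hasEigenvector
    exact ⟨x, hx0, Module.End.mem_eigenspace_iff.1 hx⟩

section Rayleigh

variable {V : Type*} [Fintype V] [DecidableEq V] {M : Matrix V V ℝ}

theorem lambdaMin_eq_sInf_spectrum (M : Matrix V V ℝ) : lambdaMin M = sInf (spectrum ℝ M) := by
  rw [lambdaMin, M.setOf_exists_mulVec_eq_smul]

theorem lambdaMin_le_of_mem_spectrum {μ : ℝ} (hμ : μ ∈ spectrum ℝ M) : lambdaMin M ≤ μ := by
  rw [lambdaMin_eq_sInf_spectrum]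
  exact csInf_le M.finite_spectrum.bddBelow hμ

theorem Matrix.IsHermitian.posSemidef_sub_lambdaMin (hM : M.IsHermitian) :
    (M - algebraMap ℝ _ (lambdaMin M)).PosSemidef := by
  refine posSemidef_iff_isHermitian_and_spectrum_nonneg.2
    ⟨hM.sub (IsSelfAdjoint.algebraMap (Matrix V V ℝ) (.all (lambdaMin M))), ?_⟩
  rw [← spectrum.sub_singleton_eq]
  rintro _ ⟨μ, hμ, _, rfl, rfl⟩
  exact sub_nonneg.2 (lambdaMin_le_of_mem_spectrum hμ)

theorem Matrix.IsHermitian.lambdaMin_mul_dotProduct_self_le (hM : M.IsHermitian) (x : V → ℝ) :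
    lambdaMin M * (x ⬝ᵥ x) ≤ x ⬝ᵥ M *ᵥ x := by
  simpa only [star_trivial, Algebra.algebraMap_eq_smul_one, sub_mulVec, smul_mulVec, one_mulVec,
    dotProduct_sub, dotProduct_smul, smul_eq_mul, sub_nonneg]
    using hM.posSemidef_sub_lambdaMin.dotProduct_mulVec_nonneg x

theorem Matrix.IsHermitian.mulVec_eq_lambdaMin_smul_of_le (hM : M.IsHermitian) {x : V → ℝ}
    (hx : x ⬝ᵥ M *ᵥ x ≤ lambdaMin M * (x ⬝ᵥ x)) : M *ᵥ x = lambdaMin M • x := by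
  have hzero : star x ⬝ᵥ (M - algebraMap ℝ _ (lambdaMin M)) *ᵥ x = 0 := by
    simp only [star_trivial, Algebra.algebraMap_eq_smul_one, sub_mulVec, smul_mulVec, one_mulVec,
      dotProduct_sub, dotProduct_smul, smul_eq_mul]
    linarith [hM.lambdaMin_mul_dotProduct_self_le x]
  simpa only [Algebra.algebraMap_eq_smul_one, sub_mulVec, smul_mulVec, one_mulVec, sub_eq_zero]
    using (hM.posSemidef_sub_lambdaMin.dotProduct_mulVec_zero_iff x).1 hzero

end Rayleigh

section SignedGraph

variable {V : Type*} (G : SimpleGraph V) {σ σ' : V → V → ℝ}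

theorem isHermitian_signedAdj [Fintype V] (hσ : ∀ u v, σ u v = σ v u) :
    (signedAdj G σ).IsHermitian := by
  ext i j
  simp only [conjTranspose_apply, star_trivial, signedAdj, hσ j i]
  split_ifs <;> simp_all [G.adj_comm]

variable [DecidableEq V] {r s t : V}

theorem signedAdj_reverse_eq (hσ : ∀ u v, σ u v = σ v u)
    (hrs : r ≠ s) (hrt : r ≠ t) (hst : s ≠ t)
    (hars : G.Adj r s) (hpos : σ r s = 1) (hart : G.Adj r t) (hneg : σ r t = -1)
    (hflip : ∀ i j, σ' i j =
      if (i = r ∧ j = s) ∨ (i = s ∧ j = r) ∨ (i = r ∧ j = t) ∨ (i = t ∧ j = r)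
      then -σ i j else σ i j) :
    signedAdj G σ' =
      signedAdj G σ + single r s (-2) + single s r (-2) + single r t 2 + single t r 2 := by
  ext i j
  rw [signedAdj, hflip]
  by_cases hij : (i = r ∧ j = s) ∨ (i = s ∧ j = r) ∨ (i = r ∧ j = t) ∨ (i = t ∧ j = r)
  · have hsr : σ s r = 1 := hσ s r ▸ hpos
    have htr : σ t r = -1 := hσ t r ▸ hneg
    rcases hij with ⟨rfl, rfl⟩ | ⟨rfl, rfl⟩ | ⟨rfl, rfl⟩ | ⟨rfl, rfl⟩ <;>
      norm_num [signedAdj, hars, hart, hars.symm, hart.symm, hpos, hneg, hsr, htr,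
        hrs, hrt, hst, hrs.symm, hrt.symm, hst.symm]
  · simp only [if_neg hij, Matrix.add_apply, single_apply, signedAdj]
    grind

end SignedGraph

/-- Let `rs` be a positive edge and `rt` a negative edge of `Σ`, and let `Σ'`
be obtained by reversing the signs of `rs` and `rt`. If `X` is a unit eigenvector of
`A(Σ)` for `λₙ(A(Σ))` and `x_r(x_s - x_t) ≥ 0`, then `λₙ(A(Σ)) ≥ λₙ(A(Σ'))`; if moreover
`x_r ≠ 0` or `x_s ≠ x_t`, then the inequality is strict. -/
theorem stmt6 (n : ℕ) (G : SimpleGraph (Fin n)) (σ σ' : Fin n → Fin n → ℝ)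
    (hσ : EdgeSigns G σ) (r s t : Fin n)
    (hrs : r ≠ s) (hrt : r ≠ t) (hst : s ≠ t)
    (hars : G.Adj r s) (hpos : σ r s = 1)
    (hart : G.Adj r t) (hneg : σ r t = -1)
    (hflip : ∀ i j : Fin n, σ' i j =
      if (i = r ∧ j = s) ∨ (i = s ∧ j = r) ∨ (i = r ∧ j = t) ∨ (i = t ∧ j = r)
      then -σ i j else σ i j)
    (X : Fin n → ℝ) (hunit : ∑ i, X i ^ 2 = 1)
    (hX : (signedAdj G σ).mulVec X = lambdaMin (signedAdj G σ) • X)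
    (hsign : 0 ≤ X r * (X s - X t)) :
    lambdaMin (signedAdj G σ') ≤ lambdaMin (signedAdj G σ) ∧
    ((X r ≠ 0 ∨ X s ≠ X t) → lambdaMin (signedAdj G σ') < lambdaMin (signedAdj G σ)) := by
  have hrev := signedAdj_reverse_eq G hσ.1 hrs hrt hst hars hpos hart hneg hflip
  set A := signedAdj G σ
  set A' := signedAdj G σ'
  have hA' : A'.IsHermitian := isHermitian_signedAdj G fun u v => by
    rw [hflip u v, hflip v u, hσ.1 u v]
    exact if_congr (by tauto) rfl rfl
  have hA'X : A' *ᵥ X = A *ᵥ X + Pi.single r (-2 * X s) + Pi.single s (-2 * X r)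
      + Pi.single r (2 * X t) + Pi.single t (2 * X r) := by
    simp only [hrev, add_mulVec, single_mulVec]
    rfl
  have hXX : X ⬝ᵥ X = 1 := by simpa only [dotProduct, sq] using hunit
  have hquad : X ⬝ᵥ A' *ᵥ X = lambdaMin A - 4 * (X r * (X s - X t)) := by
    rw [hA'X]
    simp only [dotProduct_add, dotProduct_single, hX, dotProduct_smul, smul_eq_mul, hXX]
    ring
  have hle := hA'.lambdaMin_mul_dotProduct_self_le X
  rw [hXX, mul_one, hquad] at hle
  refine ⟨by linarith, fun hne => ?_⟩
  by_contra! hge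
  have heig : A' *ᵥ X = A *ᵥ X := by
    rw [hA'.mulVec_eq_lambdaMin_smul_of_le (by rw [hXX, hquad]; linarith), hX]
    congr 1
    linarith
  have hr := congrFun hA'X r
  have hs := congrFun hA'X s
  simp only [heig, Pi.add_apply, Pi.single_apply, hrs, hrt, hst, hrs.symm, if_true,
    if_false] at hr hs
  rcases hne with hne | hne <;> exact hne (by linarith)
end

section
/- Let Σ be a signed graph on n vertices, let r, s, t, u be distinct vertices with rs a positive edge and tu a negative edge of Σ, and let Σ' be the signed graph obtained from Σ by reversing the signs of the edges rs and tu. Let X = (x_1,…,x_n)ᵀ be a unit eigenvector of A(Σ) corresponding to λ_n(A(Σ)). If x_r x_s ≥ x_t x_u, then λ_n(A(Σ)) ≥ λ_n(A(Σ')); moreover, if in addition at least one of x_r, x_s, x_t, x_u is nonzero, then λ_n(A(Σ)) > λ_n(A(Σ')). -/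
open Matrix

namespace Matrix

variable {V : Type*} [Fintype V] [DecidableEq V]

theorem dotProduct_single_mulVec {R : Type*} [CommSemiring R] (a b : V) (c : R) (x : V → R) :
    x ⬝ᵥ (single a b c *ᵥ x) = c * x a * x b := by
  simp [single_mulVec_eq, dotProduct_smul, mul_comm, mul_left_comm]

theorem mem_spectrum_iff_exists_mulVec_eq_smul {K : Type*} [Field K] {M : Matrix V V K}
    {μ : K} : μ ∈ spectrum K M ↔ ∃ x ≠ 0, M *ᵥ x = μ • x := by
  rw [← spectrum_toLin', ← Module.End.hasEigenvalue_iff_mem_spectrum]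
  constructor
  · intro h
    obtain ⟨x, hx⟩ := h.exists_hasEigenvector
    exact ⟨x, hx.2, by simpa using hx.apply_eq_smul⟩
  · rintro ⟨x, hx0, hx⟩
    exact Module.End.hasEigenvalue_of_hasEigenvector
      ⟨Module.End.mem_eigenspace_iff.mpr (by simpa using hx), hx0⟩

theorem lambdaMin_eq_sInf_spectrum (M : Matrix V V ℝ) : lambdaMin M = sInf (spectrum ℝ M) := by
  rw [lambdaMin]
  congr 1
  ext μ
  exact mem_spectrum_iff_exists_mulVec_eq_smul.symm

theorem IsHermitian.posSemidef_sub_lambdaMin_s7 {M : Matrix V V ℝ} (hM : M.IsHermitian) :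
    (M - lambdaMin M • 1).PosSemidef := by
  rw [posSemidef_iff_isHermitian_and_spectrum_nonneg]
  refine ⟨hM.sub (isHermitian_one.smul (IsSelfAdjoint.all _)), ?_⟩
  rw [← Algebra.algebraMap_eq_smul_one, ← spectrum.sub_singleton_eq]
  rintro _ ⟨μ, hμ, c, rfl, rfl⟩
  rw [lambdaMin_eq_sInf_spectrum]
  exact sub_nonneg.mpr (csInf_le (M.finite_spectrum.bddBelow) hμ)

theorem dotProduct_sub_smul_one_mulVec {R : Type*} [CommRing R] (M : Matrix V V R) (c : R)
    (x : V → R) : x ⬝ᵥ ((M - c • 1) *ᵥ x) = x ⬝ᵥ (M *ᵥ x) - c * (x ⬝ᵥ x) := by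
  rw [sub_mulVec, smul_mulVec, one_mulVec, dotProduct_sub, dotProduct_smul, smul_eq_mul]

theorem IsHermitian.lambdaMin_mul_dotProduct_self_le_s7 {M : Matrix V V ℝ} (hM : M.IsHermitian)
    (x : V → ℝ) : lambdaMin M * (x ⬝ᵥ x) ≤ x ⬝ᵥ (M *ᵥ x) := by
  have := hM.posSemidef_sub_lambdaMin_s7.dotProduct_mulVec_nonneg x
  rw [star_trivial, dotProduct_sub_smul_one_mulVec] at this
  linarith

theorem IsHermitian.mulVec_eq_lambdaMin_smul_of_dotProduct_le {M : Matrix V V ℝ}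
    (hM : M.IsHermitian) {x : V → ℝ} (hx : x ⬝ᵥ (M *ᵥ x) ≤ lambdaMin M * (x ⬝ᵥ x)) :
    M *ᵥ x = lambdaMin M • x := by
  have hpsd := hM.posSemidef_sub_lambdaMin_s7
  have hnonneg := hpsd.dotProduct_mulVec_nonneg x
  rw [star_trivial, dotProduct_sub_smul_one_mulVec] at hnonneg
  have hzero := (hpsd.dotProduct_mulVec_zero_iff x).mp (by
    rw [star_trivial, dotProduct_sub_smul_one_mulVec]
    linarith)
  rwa [sub_mulVec, smul_mulVec, one_mulVec, sub_eq_zero] at hzero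

end Matrix

section SignedGraph

variable {V : Type*} (G : SimpleGraph V)

theorem signedAdj_isHermitian [Fintype V] {σ : V → V → ℝ} (hσ : ∀ i j, σ i j = σ j i) :
    (signedAdj G σ).IsHermitian := by
  rw [isHermitian_iff_isSymm]
  refine IsSymm.ext fun i j => ?_
  simp only [signedAdj]
  rw [G.adj_comm, hσ]

variable [DecidableEq V]

def reverseEdgeSign (σ : V → V → ℝ) (a b : V) : V → V → ℝ :=
  fun i j => if s(i, j) = s(a, b) then -σ i j else σ i j

theorem reverseEdgeSign_comm {σ : V → V → ℝ} (hσ : ∀ i j, σ i j = σ j i) (a b i j : V) :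
    reverseEdgeSign σ a b i j = reverseEdgeSign σ a b j i := by
  simp only [reverseEdgeSign, Sym2.eq_swap (a := i), hσ i j]

theorem reverseEdgeSign_apply_of_ne (σ : V → V → ℝ) {a b i j : V} (h : s(i, j) ≠ s(a, b)) :
    reverseEdgeSign σ a b i j = σ i j :=
  if_neg h

theorem reverseEdgeSign_reverseEdgeSign_apply (σ : V → V → ℝ) {a b c d : V}
    (h : s(a, b) ≠ s(c, d)) (i j : V) :
    reverseEdgeSign (reverseEdgeSign σ a b) c d i j =
      if (i = a ∧ j = b) ∨ (i = b ∧ j = a) ∨ (i = c ∧ j = d) ∨ (i = d ∧ j = c)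
      then -σ i j else σ i j := by
  rw [Ne, Sym2.eq_iff] at h
  simp only [reverseEdgeSign, Sym2.eq_iff]
  split_ifs <;> grind

theorem signedAdj_reverseEdgeSign {σ : V → V → ℝ} {a b : V} (hσ : ∀ i j, σ i j = σ j i)
    (hab : G.Adj a b) :
    signedAdj G (reverseEdgeSign σ a b) =
      signedAdj G σ + (single a b (-2 * σ a b) + single b a (-2 * σ a b)) := by
  ext i j
  rw [Matrix.add_apply, Matrix.add_apply]
  unfold signedAdj reverseEdgeSign
  by_cases h : s(i, j) = s(a, b)
  · rcases Sym2.eq_iff.mp h with ⟨rfl, rfl⟩ | ⟨rfl, rfl⟩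
    · simp [hab, hab.ne]
      ring
    · simp [hab.symm, hab.ne, hσ i j]
      ring
  · have hab' : ¬(a = i ∧ b = j) := fun ⟨hi, hj⟩ => h (by rw [hi, hj])
    have hba' : ¬(b = i ∧ a = j) := fun ⟨hi, hj⟩ => h (by rw [hi, hj, Sym2.eq_swap])
    simp [h, hab', hba']

theorem signedAdj_reverseEdgeSign_reverseEdgeSign {σ : V → V → ℝ} {a b c d : V}
    (hσ : ∀ i j, σ i j = σ j i) (h : s(a, b) ≠ s(c, d)) (hab : G.Adj a b) (hcd : G.Adj c d) :
    signedAdj G (reverseEdgeSign (reverseEdgeSign σ a b) c d) = signedAdj G σ +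
      ((single a b (-2 * σ a b) + single b a (-2 * σ a b)) +
        (single c d (-2 * σ c d) + single d c (-2 * σ c d))) := by
  rw [signedAdj_reverseEdgeSign G (reverseEdgeSign_comm hσ a b) hcd,
    signedAdj_reverseEdgeSign G hσ hab, reverseEdgeSign_apply_of_ne σ h.symm, add_assoc]

end SignedGraph

/-- Let `rs` be a positive edge and `tu` a negative edge of `Σ` (with
`r, s, t, u` distinct), and let `Σ'` be obtained by reversing the signs of `rs` and `tu`.
If `X` is a unit eigenvector of `A(Σ)` for `λₙ(A(Σ))` and `x_r x_s ≥ x_t x_u`, then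
`λₙ(A(Σ)) ≥ λₙ(A(Σ'))`; if moreover one of `x_r, x_s, x_t, x_u` is nonzero, then the
inequality is strict. -/
theorem stmt7 (n : ℕ) (G : SimpleGraph (Fin n)) (σ σ' : Fin n → Fin n → ℝ)
    (hσ : EdgeSigns G σ) (r s t u : Fin n)
    (hrs : r ≠ s) (hrt : r ≠ t) (hru : r ≠ u) (hst : s ≠ t) (hsu : s ≠ u) (htu : t ≠ u)
    (hars : G.Adj r s) (hpos : σ r s = 1)
    (hatu : G.Adj t u) (hneg : σ t u = -1)
    (hflip : ∀ i j : Fin n, σ' i j =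
      if (i = r ∧ j = s) ∨ (i = s ∧ j = r) ∨ (i = t ∧ j = u) ∨ (i = u ∧ j = t)
      then -σ i j else σ i j)
    (X : Fin n → ℝ) (hunit : ∑ i, X i ^ 2 = 1)
    (hX : (signedAdj G σ).mulVec X = lambdaMin (signedAdj G σ) • X)
    (hsign : X t * X u ≤ X r * X s) :
    lambdaMin (signedAdj G σ') ≤ lambdaMin (signedAdj G σ) ∧
    ((X r ≠ 0 ∨ X s ≠ 0 ∨ X t ≠ 0 ∨ X u ≠ 0) →
      lambdaMin (signedAdj G σ') < lambdaMin (signedAdj G σ)) := by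
  have hne : s(r, s) ≠ s(t, u) := by
    rw [Ne, Sym2.eq_iff]
    tauto
  have hσ' : σ' = reverseEdgeSign (reverseEdgeSign σ r s) t u :=
    funext₂ fun i j => (hflip i j).trans (reverseEdgeSign_reverseEdgeSign_apply σ hne i j).symm
  set P : Matrix (Fin n) (Fin n) ℝ :=
    (single r s (-2) + single s r (-2)) + (single t u 2 + single u t 2) with hP
  have hA' : signedAdj G σ' = signedAdj G σ + P := by
    rw [hσ', signedAdj_reverseEdgeSign_reverseEdgeSign G hσ.1 hne hars hatu, hpos, hneg]
    norm_num [hP]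
  have hHerm' : (signedAdj G σ').IsHermitian :=
    hσ' ▸ signedAdj_isHermitian G (reverseEdgeSign_comm (reverseEdgeSign_comm hσ.1 r s) t u)
  have hXX : X ⬝ᵥ X = 1 := by simpa [dotProduct, sq] using hunit
  have hquad : X ⬝ᵥ (signedAdj G σ' *ᵥ X) =
      lambdaMin (signedAdj G σ) - 4 * (X r * X s - X t * X u) := by
    simp only [hA', hP, add_mulVec, dotProduct_add, hX, dotProduct_smul, hXX,
      dotProduct_single_mulVec, smul_eq_mul]
    ring
  have hle := hHerm'.lambdaMin_mul_dotProduct_self_le_s7 X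
  rw [hXX, mul_one, hquad] at hle
  refine ⟨by linarith, fun hnz => lt_of_le_of_ne (by linarith) fun heq => ?_⟩
  have hPX : P *ᵥ X = 0 := by
    have hEig := hHerm'.mulVec_eq_lambdaMin_smul_of_dotProduct_le (x := X)
      (by rw [hXX, mul_one, hquad, heq]; linarith)
    rwa [heq, hA', add_mulVec, hX, add_eq_left] at hEig
  have hr := congrFun hPX r
  have hs := congrFun hPX s
  have ht := congrFun hPX t
  have hu := congrFun hPX u
  simp [hP, add_mulVec, single_mulVec, hrs, hrt, hru, hst, hsu, htu, hrs.symm,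
    hrt.symm, hru.symm, hst.symm, hsu.symm, htu.symm] at hr hs ht hu
  tauto
end

section
/- Let n ≥ 4 and let Σ = (K_n, T^-_{1,n-3}) be the signed complete graph whose negative edges form the spanning double star T_{1,n-3}. Then the characteristic polynomial of A(Σ) equals (λ+1)^{n−3} · (λ³ + (3−n)λ² + (3−2n)λ + 7n − 23). -/
open scoped Classical in
/-- Adjacency matrix of the signed complete graph `(K_n, T⁻)`: entries are `0` on the
diagonal, `-1` on edges of `T` and `+1` on all other off-diagonal positions. -/
noncomputable def signedCompleteMatrix {n : ℕ} (T : SimpleGraph (Fin n)) :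
    Matrix (Fin n) (Fin n) ℝ :=
  fun i j => if i = j then 0 else if T.Adj i j then -1 else 1

/-- The largest (real) eigenvalue `λ₁` of a matrix. -/
noncomputable def lambdaMax {V : Type*} [Fintype V] (M : Matrix V V ℝ) : ℝ :=
  sSup {μ : ℝ | ∃ x : V → ℝ, x ≠ 0 ∧ M.mulVec x = μ • x}

/-- The double star `T_{a,b}`: an edge `0 - 1` with `a` pendant vertices attached to `0`
(indices `2, …, a+1`) and `b` pendant vertices attached to `1` (indices `a+2, …, a+b+1`). -/
def doubleStar (a b : ℕ) : SimpleGraph (Fin (a + b + 2)) :=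
  SimpleGraph.fromRel (fun i j =>
    ((i : ℕ) = 0 ∧ (j : ℕ) = 1) ∨
    ((i : ℕ) = 0 ∧ 2 ≤ (j : ℕ) ∧ (j : ℕ) < a + 2) ∨
    ((i : ℕ) = 1 ∧ a + 2 ≤ (j : ℕ)))

/-- The tree `𝒯_{a-1,b-1}` on `a + b` vertices: a star `K_{1,a-1}` with center `0` and
leaves `1, …, a-1`, a star `K_{1,b-1}` with center `a` and leaves `a+1, …, a+b-1`,
together with an edge between the pendant vertices `1` and `a+1`. -/
def treeTT (a b : ℕ) : SimpleGraph (Fin (a + b)) :=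
  SimpleGraph.fromRel (fun i j =>
    ((i : ℕ) = 0 ∧ 1 ≤ (j : ℕ) ∧ (j : ℕ) ≤ a - 1) ∨
    ((i : ℕ) = a ∧ a + 1 ≤ (j : ℕ) ∧ (j : ℕ) ≤ a + b - 1) ∨
    ((i : ℕ) = 1 ∧ (j : ℕ) = a + 1))

/-- A tree on `Fin n` is the star `K_{1,n-1}` iff some vertex is adjacent to all others. -/
def IsStar {n : ℕ} (T : SimpleGraph (Fin n)) : Prop :=
  ∃ v : Fin n, ∀ u : Fin n, u ≠ v → T.Adj v u

/-!
Write `A` for the adjacency matrix and `n = a + b + 2`. The matrix `A + 1` has entry `-1` on the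
edges of the double star and `1` elsewhere, so its rows take only three values up to sign:
`A + 1 = P Q` with `P` of size `n × 3` and `Q` of size `3 × n`. Hence
`χ_{A+1} = X^{n-3} χ_{QP}`, and `QP = !![2, -a, b; -2, a, b; 2, a, b]` has characteristic
polynomial `X³ - (a + b + 2) X² + 8ab`. Shifting by `1` gives
`χ_A = (X + 1)^{n-3} ((X + 1)³ - (a + b + 2)(X + 1)² + 8ab)`; for `a = 1` this is the claim.
-/

namespace DoubleStar

/-- Constant on each vertex class of `doubleStar a b`: `{0}`, `{1}`, the leaves `2, …, a+1`
at `0` and the leaves `a+2, …` at `1`. -/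
def blockValue (a : ℕ) (x₀ x₁ xA xB : ℝ) (i : ℕ) : ℝ :=
  if i = 0 then x₀ else if i = 1 then x₁ else if i < a + 2 then xA else xB

lemma blockValue_mul (a : ℕ) (x₀ x₁ xA xB y₀ y₁ yA yB : ℝ) (i : ℕ) :
    blockValue a x₀ x₁ xA xB i * blockValue a y₀ y₁ yA yB i =
      blockValue a (x₀ * y₀) (x₁ * y₁) (xA * yA) (xB * yB) i := by
  unfold blockValue
  split_ifs <;> rfl

lemma sum_blockValue (a b : ℕ) (x₀ x₁ xA xB : ℝ) :
    ∑ i : Fin (a + b + 2), blockValue a x₀ x₁ xA xB i = x₀ + x₁ + a * xA + b * xB := by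
  rw [Fin.sum_univ_eq_sum_range (blockValue a x₀ x₁ xA xB), Finset.range_eq_Ico,
    ← Finset.sum_Ico_consecutive _ (Nat.zero_le _) (by omega : a + 2 ≤ a + b + 2),
    ← Finset.sum_Ico_consecutive _ (Nat.zero_le 2) (by omega : 2 ≤ a + 2)]
  have hA : ∑ i ∈ Finset.Ico 2 (a + 2), blockValue a x₀ x₁ xA xB i = a * xA := by
    rw [Finset.sum_congr rfl (g := fun _ => xA) fun i hi => ?_]
    · simp
    · rw [Finset.mem_Ico] at hi
      rw [blockValue, if_neg (by omega), if_neg (by omega), if_pos hi.2]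
  have hB : ∑ i ∈ Finset.Ico (a + 2) (a + b + 2), blockValue a x₀ x₁ xA xB i = b * xB := by
    rw [Finset.sum_congr rfl (g := fun _ => xB) fun i hi => ?_]
    · simp
    · rw [Finset.mem_Ico] at hi
      rw [blockValue, if_neg (by omega), if_neg (by omega), if_neg (by omega)]
  rw [hA, hB, Finset.sum_Ico_eq_sum_range]
  simp [Finset.sum_range_succ, blockValue]

/-- The rows of `A + 1` at vertex `0`, at a leaf of `0` and at a leaf of `1`. Every row of
`A + 1` is one of these, up to sign (the row at `1` is minus the row at `0`), and `rowCoeffs`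
records which. -/
noncomputable def rowBasis (a b : ℕ) : Matrix (Fin 3) (Fin (a + b + 2)) ℝ :=
  Matrix.of ![fun j => blockValue a 1 (-1) (-1) 1 j, fun j => blockValue a (-1) 1 1 1 j,
    fun j => blockValue a 1 (-1) 1 1 j]

noncomputable def rowCoeffs (a b : ℕ) : Matrix (Fin (a + b + 2)) (Fin 3) ℝ :=
  Matrix.of fun i => ![blockValue a 1 (-1) 0 0 i, blockValue a 0 0 1 0 i,
    blockValue a 0 0 0 1 i]

lemma rowBasis_mul_rowCoeffs (a b : ℕ) :
    rowBasis a b * rowCoeffs a b = !![2, -(a : ℝ), b; -2, a, b; 2, a, b] := by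
  ext k l
  fin_cases k <;> fin_cases l <;>
    simp [rowBasis, rowCoeffs, Matrix.mul_apply, blockValue_mul, sum_blockValue] <;> norm_num

lemma signedCompleteMatrix_eq_rowCoeffs_mul_rowBasis (a b : ℕ) :
    signedCompleteMatrix (doubleStar a b) =
      rowCoeffs a b * rowBasis a b - Matrix.scalar _ 1 := by
  ext ⟨i, hi⟩ ⟨j, hj⟩
  simp only [signedCompleteMatrix, doubleStar, SimpleGraph.fromRel_adj, Matrix.sub_apply,
    Matrix.mul_apply, Fin.sum_univ_three, rowCoeffs, rowBasis, Matrix.of_apply,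
    Matrix.cons_val_zero, Matrix.cons_val_one, Matrix.cons_val_two, Matrix.scalar_apply,
    Matrix.diagonal_apply, blockValue, Fin.mk.injEq, ne_eq]
  split_ifs <;> first | omega | simp_all

open Polynomial in
lemma charpoly_rowBasis_mul_rowCoeffs (a b : ℕ) :
    (rowBasis a b * rowCoeffs a b).charpoly =
      X ^ 3 - C ((a + b + 2 : ℝ)) * X ^ 2 + C (8 * a * b : ℝ) := by
  rw [rowBasis_mul_rowCoeffs, Matrix.charpoly, Matrix.det_fin_three]
  simp [C_ofNat]
  ring

end DoubleStar

open Polynomial in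
theorem charpoly_signedCompleteMatrix_doubleStar (a b : ℕ) (h : 1 ≤ a + b) :
    (signedCompleteMatrix (doubleStar a b)).charpoly =
      (X + 1) ^ (a + b - 1) *
        ((X + 1) ^ 3 - C ((a + b + 2 : ℝ)) * (X + 1) ^ 2 + C (8 * a * b : ℝ)) := by
  have hcard : Fintype.card (Fin 3) ≤ Fintype.card (Fin (a + b + 2)) := by simpa
  rw [DoubleStar.signedCompleteMatrix_eq_rowCoeffs_mul_rowBasis, Matrix.charpoly_sub_scalar,
    Matrix.charpoly_mul_comm_of_le _ _ hcard, DoubleStar.charpoly_rowBasis_mul_rowCoeffs]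
  simp [Fintype.card_fin, show a + b + 2 - 3 = a + b - 1 by omega, mul_comp]

open Polynomial in
/-- For `n ≥ 4`, the characteristic polynomial of `A((K_n, T⁻_{1,n-3}))`
equals `(λ+1)^(n-3) (λ³ + (3-n)λ² + (3-2n)λ + 7n - 23)`. -/
theorem stmt10 (n : ℕ) (hn : 4 ≤ n) :
    Matrix.charpoly (signedCompleteMatrix (doubleStar 1 (n - 3))) =
      (X + 1) ^ (n - 3) *
        (X ^ 3 + C (3 - (n : ℝ)) * X ^ 2 + C (3 - 2 * (n : ℝ)) * X + C (7 * (n : ℝ) - 23)) := by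
  rw [charpoly_signedCompleteMatrix_doubleStar 1 (n - 3) le_self_add, Nat.add_sub_cancel_left,
    Nat.cast_sub (by omega : 3 ≤ n)]
  congr 1
  simp only [map_add, map_sub, map_mul, map_natCast, C_ofNat, Nat.cast_one, map_one]
  ring
end

section
/- Let n ≥ 6 and let Σ = (K_n, T^-_{1,n-3}) be the signed complete graph whose negative edges form the spanning double star T_{1,n-3}. Then λ_1(A(Σ)) > n − 2. -/
/-!
Bound `λ₁` from below by a Rayleigh quotient: if every point of the spectrum of a real symmetric
`A` were at most `c`, then `c • 1 - A` would be positive semidefinite by the continuous functional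
calculus, so `x ⬝ᵥ A *ᵥ x ≤ c * (x ⬝ᵥ x)` for all `x`. With `t = n - 3`, take
`x = (t², -t², t(t-2), (t+2)(t-1), …, (t+2)(t-1))` in the labelling of `doubleStar 1 t`.
It is constant on the leaves at the second centre, hence so is `A *ᵥ x`, and a direct
computation gives `x ⬝ᵥ A *ᵥ x - (n-2) (x ⬝ᵥ x) = (t+2)(t-1)t(t-2)²`, positive for `t ≥ 3`.
-/

open Matrix

theorem Matrix.exists_mulVec_eq_smul_iff_mem_spectrum {K n : Type*} [Field K] [Fintype n]
    [DecidableEq n] (M : Matrix n n K) (μ : K) :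
    (∃ x : n → K, x ≠ 0 ∧ M *ᵥ x = μ • x) ↔ μ ∈ spectrum K M := by
  rw [← Matrix.spectrum_toLin', ← Module.End.hasEigenvalue_iff_mem_spectrum,
    Module.End.hasEigenvalue_iff]
  simp [Submodule.ne_bot_iff, and_comm]

open scoped MatrixOrder in
theorem lt_lambdaMax_of_lt_dotProduct {n : Type*} [Fintype n] [DecidableEq n]
    {M : Matrix n n ℝ} (hM : M.IsHermitian) {c : ℝ} (x : n → ℝ)
    (hx : c * (x ⬝ᵥ x) < x ⬝ᵥ M *ᵥ x) : c < lambdaMax M := by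
  have hset : {μ : ℝ | ∃ x : n → ℝ, x ≠ 0 ∧ M *ᵥ x = μ • x} = spectrum ℝ M :=
    Set.ext M.exists_mulVec_eq_smul_iff_mem_spectrum
  rw [lambdaMax, hset]
  by_contra! hle
  have hpsd : M ≤ algebraMap ℝ _ c := le_algebraMap_of_spectrum_le
    (fun μ hμ => (le_csSup M.finite_spectrum.bddAbove hμ).trans hle) hM
  have := (Matrix.le_iff.mp hpsd).dotProduct_mulVec_nonneg x
  simp only [Algebra.algebraMap_eq_smul_one, sub_mulVec, smul_mulVec, one_mulVec, dotProduct_sub,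
    dotProduct_smul, star_trivial, smul_eq_mul] at this
  linarith

open scoped Classical in
theorem signedCompleteMatrix_isHermitian {n : ℕ} (T : SimpleGraph (Fin n)) :
    (signedCompleteMatrix T).IsHermitian := by
  ext i j
  simp [signedCompleteMatrix, eq_comm, T.adj_comm]

open scoped Classical in
theorem signedCompleteMatrix_mulVec_apply {n : ℕ} (T : SimpleGraph (Fin n)) (x : Fin n → ℝ)
    (i : Fin n) :
    (signedCompleteMatrix T *ᵥ x) i =
      ∑ j, x j - x i - 2 * ∑ j, if T.Adj i j then x j else 0 := by
  have hentry : ∀ j, signedCompleteMatrix T i j * x j =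
      x j - (if i = j then x j else 0) - 2 * (if T.Adj i j then x j else 0) := by
    intro j
    by_cases h : i = j
    · subst h
      simp [signedCompleteMatrix]
    · simp only [signedCompleteMatrix, h, if_false]
      split_ifs <;> ring
  simp only [mulVec, dotProduct, hentry, Finset.sum_sub_distrib, ← Finset.mul_sum,
    Finset.sum_ite_eq, Finset.mem_univ, if_true]

def stepVec {N : ℕ} (p q r l : ℝ) : Fin N → ℝ := fun j =>
  if (j : ℕ) = 0 then p else if (j : ℕ) = 1 then q else if (j : ℕ) = 2 then r else l

theorem sum_stepVec {N k : ℕ} (hN : N = k + 3) (p q r l : ℝ) :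
    ∑ j : Fin N, stepVec p q r l j = p + q + r + k * l := by
  subst hN
  simp only [stepVec, Fin.val_eq_zero_iff, Fin.sum_univ_succ, ↓reduceIte, Fin.succ_ne_zero,
    Fin.val_succ, Nat.add_eq_right, Nat.reduceEqDiff, Finset.sum_const, Finset.card_univ,
    Fintype.card_fin, nsmul_eq_mul]
  ring

theorem stepVec_mul_stepVec {N : ℕ} (p q r l p' q' r' l' : ℝ) :
    stepVec (N := N) p q r l * stepVec p' q' r' l' =
      stepVec (p * p') (q * q') (r * r') (l * l') := by
  ext j
  simp only [Pi.mul_apply, stepVec]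
  split_ifs <;> rfl

theorem stepVec_dotProduct_stepVec {N k : ℕ} (hN : N = k + 3) (p q r l p' q' r' l' : ℝ) :
    stepVec (N := N) p q r l ⬝ᵥ stepVec p' q' r' l' =
      p * p' + q * q' + r * r' + k * (l * l') := by
  rw [dotProduct, ← sum_stepVec hN]
  exact Finset.sum_congr rfl fun j _ => congrFun (stepVec_mul_stepVec ..) j

theorem doubleStar_one_adj_iff {m : ℕ} {i j : Fin (1 + m + 2)} :
    (doubleStar 1 m).Adj i j ↔ (i : ℕ) ≠ j ∧
      (((i : ℕ) = 0 ∧ (j : ℕ) = 1) ∨ ((i : ℕ) = 0 ∧ (j : ℕ) = 2) ∨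
        ((i : ℕ) = 1 ∧ 3 ≤ (j : ℕ)) ∨ ((j : ℕ) = 0 ∧ (i : ℕ) = 1) ∨
        ((j : ℕ) = 0 ∧ (i : ℕ) = 2) ∨ ((j : ℕ) = 1 ∧ 3 ≤ (i : ℕ))) := by
  rw [doubleStar, SimpleGraph.fromRel_adj, ne_eq, Fin.ext_iff, ← ne_eq]
  omega

open scoped Classical in
theorem sum_doubleStar_one_adj_stepVec (m : ℕ) (p q r l : ℝ) (i : Fin (1 + m + 2)) :
    (∑ j, if (doubleStar 1 m).Adj i j then stepVec p q r l j else 0) =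
      stepVec (q + r) (p + m * l) p q i := by
  have hrow : ∀ j, (if (doubleStar 1 m).Adj i j then stepVec p q r l j else 0) =
      stepVec (if (i : ℕ) = 1 ∨ (i : ℕ) = 2 then p else 0)
        (if (i : ℕ) = 0 ∨ 3 ≤ (i : ℕ) then q else 0)
        (if (i : ℕ) = 0 then r else 0) (if (i : ℕ) = 1 then l else 0) j := by
    intro j
    simp only [doubleStar_one_adj_iff, stepVec]
    split_ifs <;> first | rfl | omega
  rw [Finset.sum_congr rfl fun j _ => hrow j, sum_stepVec (k := m) (by omega)]
  simp only [stepVec]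
  split_ifs <;> first | omega | ring

theorem signedCompleteMatrix_doubleStar_one_mulVec_stepVec (m : ℕ) (p q r l : ℝ) :
    signedCompleteMatrix (doubleStar 1 m) *ᵥ stepVec p q r l =
      let s := p + q + r + m * l
      stepVec (s - p - 2 * (q + r)) (s - q - 2 * (p + m * l)) (s - r - 2 * p) (s - l - 2 * q) := by
  ext i
  rw [signedCompleteMatrix_mulVec_apply, sum_doubleStar_one_adj_stepVec,
    sum_stepVec (k := m) (by omega)]
  simp only [stepVec]
  split_ifs <;> ring

noncomputable def testVec (m : ℕ) : Fin (1 + m + 2) → ℝ :=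
  stepVec ((m : ℝ) ^ 2) (-(m : ℝ) ^ 2) (m * (m - 2)) ((m + 2) * (m - 1))

theorem testVec_dotProduct_mulVec (m : ℕ) :
    testVec m ⬝ᵥ signedCompleteMatrix (doubleStar 1 m) *ᵥ testVec m =
      (m + 1) * (testVec m ⬝ᵥ testVec m) + (m + 2) * (m - 1) * m * (m - 2) ^ 2 := by
  have hN : 1 + m + 2 = m + 3 := by omega
  rw [testVec, signedCompleteMatrix_doubleStar_one_mulVec_stepVec,
    stepVec_dotProduct_stepVec hN, stepVec_dotProduct_stepVec hN]
  ring

/-- For `n ≥ 6`, `λ₁(A((K_n, T⁻_{1,n-3}))) > n - 2`. -/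
theorem stmt11 (n : ℕ) (hn : 6 ≤ n) :
    (n : ℝ) - 2 < lambdaMax (signedCompleteMatrix (doubleStar 1 (n - 3))) := by
  obtain ⟨m, rfl⟩ : ∃ m, n = m + 3 := ⟨n - 3, by omega⟩
  have hm : (3 : ℝ) ≤ m := by exact_mod_cast (by omega : 3 ≤ m)
  rw [Nat.add_sub_cancel]
  refine lt_lambdaMax_of_lt_dotProduct (signedCompleteMatrix_isHermitian _) (testVec m) ?_
  rw [testVec_dotProduct_mulVec]
  have hexcess : 0 < ((m : ℝ) + 2) * (m - 1) * m * (m - 2) ^ 2 :=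
    mul_pos (mul_pos (mul_pos (by linarith) (by linarith)) (by linarith)) (pow_pos (by linarith) 2)
  push_cast
  linarith
end

section
/- Let n ≥ 6 and let Σ = (K_n, T^-_{1,n-3}) be the signed complete graph whose negative edges form the spanning double star T_{1,n-3}. Then λ_n(A(Σ)) > −4. -/
/-!
Write `A = J - I - 2 • adj T` for the signed complete matrix. For the double star `T_{1,m}`
with centres `0, 1`, the pendant vertex `2` at `0` and the pendant vertices `P` at `1`, put
`a, b, c = x 0, x 1, x 2` and `t = ∑_{i ∈ P} x i`. Then
`xᵀ (A + 4 I) x = (a + b + c + t)² + 3 ‖x‖² - 4ab - 4ac - 4bt`, which is positive definite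
after completing squares. As `A` is symmetric, its least eigenvalue is attained at an
eigenvector, so it exceeds `-4`.
-/

open Matrix

lemma finite_setOf_mulVec_eq_smul {V : Type*} [Fintype V] [DecidableEq V]
    (M : Matrix V V ℝ) : {μ : ℝ | ∃ x : V → ℝ, x ≠ 0 ∧ M *ᵥ x = μ • x}.Finite :=
  (Module.End.finite_hasEigenvalue (toLin' M)).subset fun _ ⟨_, hx, hμ⟩ =>
    Module.End.hasEigenvalue_of_hasEigenvector
      (Module.End.hasEigenvector_iff.mpr ⟨Module.End.mem_eigenspace_iff.mpr hμ, hx⟩)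

namespace Matrix.IsHermitian

variable {V : Type*} [Fintype V] [DecidableEq V] [Nonempty V] {M : Matrix V V ℝ}

lemma exists_mulVec_eq_lambdaMin_smul (hM : M.IsHermitian) :
    ∃ x : V → ℝ, x ≠ 0 ∧ M *ᵥ x = lambdaMin M • x := by
  have hne : {μ : ℝ | ∃ x : V → ℝ, x ≠ 0 ∧ M *ᵥ x = μ • x}.Nonempty := by
    obtain ⟨j⟩ := ‹Nonempty V›
    refine ⟨hM.eigenvalues j, _, ?_, hM.mulVec_eigenvectorBasis j⟩
    simpa using hM.eigenvectorBasis.orthonormal.ne_zero j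
  exact hne.csInf_mem (finite_setOf_mulVec_eq_smul M)

lemma lt_lambdaMin (hM : M.IsHermitian) {c : ℝ}
    (h : ∀ x : V → ℝ, x ≠ 0 → c * (x ⬝ᵥ x) < x ⬝ᵥ (M *ᵥ x)) : c < lambdaMin M := by
  obtain ⟨x, hx, hMx⟩ := hM.exists_mulVec_eq_lambdaMin_smul
  have hpos : 0 < x ⬝ᵥ x := by simpa using dotProduct_star_self_pos_iff.mpr hx
  have hc := h x hx
  rw [hMx, dotProduct_smul, smul_eq_mul] at hc
  exact lt_of_mul_lt_mul_right hc hpos.le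

end Matrix.IsHermitian

section SignedCompleteMatrix

variable {n : ℕ} (T : SimpleGraph (Fin n))

lemma isHermitian_signedCompleteMatrix : (signedCompleteMatrix T).IsHermitian := by
  refine IsHermitian.ext fun i j => ?_
  rcases eq_or_ne i j with rfl | hij
  · simp
  · simp only [signedCompleteMatrix, hij, hij.symm, if_false, star_trivial]
    rw [T.adj_comm]

open scoped Classical in
lemma signedCompleteMatrix_eq :
    signedCompleteMatrix T = of (fun _ _ => 1) - 1 - (2 : ℝ) • T.adjMatrix ℝ := by
  ext i j
  rcases eq_or_ne i j with rfl | hij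
  · simp [signedCompleteMatrix]
  · by_cases hT : T.Adj i j <;> norm_num [signedCompleteMatrix, hij, hT, one_apply_ne hij]

open scoped Classical in
lemma dotProduct_signedCompleteMatrix_mulVec (x : Fin n → ℝ) :
    x ⬝ᵥ (signedCompleteMatrix T *ᵥ x) =
      (∑ i, x i) ^ 2 - x ⬝ᵥ x - 2 * (x ⬝ᵥ (T.adjMatrix ℝ *ᵥ x)) := by
  rw [signedCompleteMatrix_eq, sub_mulVec, sub_mulVec, one_mulVec, smul_mulVec, dotProduct_sub,
    dotProduct_sub, dotProduct_smul, smul_eq_mul, sq]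
  congr 2
  simp [dotProduct, mulVec, Finset.sum_mul]

end SignedCompleteMatrix

section DoubleStar

variable {m : ℕ}

lemma val_two_eq : ((2 : Fin (1 + m + 2)) : ℕ) = 2 :=
  Nat.mod_eq_of_lt (show 2 < 1 + m + 2 by omega)

lemma sum_univ_eq_add_sum_pendant {M : Type*} [AddCommMonoid M] (f : Fin (1 + m + 2) → M) :
    ∑ i, f i = f 0 + f 1 + f 2 + ∑ i : Fin (1 + m + 2) with 3 ≤ i.val, f i := by
  have hsmall : ({i | ¬ 3 ≤ (i : ℕ)} : Finset (Fin (1 + m + 2))) = {0, 1, 2} := by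
    ext i
    simp only [Finset.mem_filter, Finset.mem_univ, true_and, Finset.mem_insert,
      Finset.mem_singleton, Fin.ext_iff, Fin.val_zero, Fin.val_one, val_two_eq]
    omega
  rw [← Finset.sum_filter_not_add_sum_filter _ (fun i : Fin (1 + m + 2) => 3 ≤ (i : ℕ)), hsmall,
    Finset.sum_insert (by
      simp only [Finset.mem_insert, Finset.mem_singleton, Fin.ext_iff, Fin.val_zero, Fin.val_one,
        val_two_eq]
      omega),
    Finset.sum_insert (by
      simp only [Finset.mem_singleton, Fin.ext_iff, Fin.val_one, val_two_eq]
      omega),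
    Finset.sum_singleton]
  abel

open scoped Classical in
lemma dotProduct_doubleStar_one_adjMatrix_mulVec (x : Fin (1 + m + 2) → ℝ) :
    x ⬝ᵥ ((doubleStar 1 m).adjMatrix ℝ *ᵥ x) =
      2 * (x 0 * x 1 + x 0 * x 2 + x 1 * ∑ j : Fin (1 + m + 2) with 3 ≤ j.val, x j) := by
  have hedges : ∀ i j : Fin (1 + m + 2), (if (doubleStar 1 m).Adj i j then x i * x j else 0) =
      (if i = 0 ∧ j = 1 then x i * x j else 0) + (if i = 1 ∧ j = 0 then x i * x j else 0)
      + (if i = 0 ∧ j = 2 then x i * x j else 0) + (if i = 2 ∧ j = 0 then x i * x j else 0)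
      + (if i = 1 ∧ 3 ≤ j.val then x i * x j else 0)
      + (if 3 ≤ i.val ∧ j = 1 then x i * x j else 0) := by
    intro i j
    simp only [doubleStar, SimpleGraph.fromRel_adj, Fin.ext_iff, Fin.val_zero, Fin.val_one,
      val_two_eq]
    split_ifs <;> first | ring1 | omega
  simp only [SimpleGraph.dotProduct_mulVec_adjMatrix, hedges, Finset.sum_add_distrib]
  simp [ite_and, Finset.sum_filter, Finset.mul_sum, mul_comm]
  ring

/-- Three times the form is `3 (t + a - b + c)² + (3a - 2c)² + (3b + 2c)² + c² + 9q`; the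
squares of `17a - 12c` and `17b + 12c` bound its `(a, b, c)`-part below by a positive multiple
of `a² + b² + c²`. -/
lemma doubleStar_form_pos {a b c t q : ℝ} (hq : 0 ≤ q) (hp : 0 < a ^ 2 + b ^ 2 + c ^ 2 + q) :
    0 < (a + b + c + t) ^ 2 + 3 * (a ^ 2 + b ^ 2 + c ^ 2 + q)
      - 4 * (a * b) - 4 * (a * c) - 4 * (b * t) := by
  nlinarith [sq_nonneg (t + a - b + c), sq_nonneg (17 * a - 12 * c), sq_nonneg (17 * b + 12 * c)]

lemma neg_four_mul_dotProduct_lt_doubleStar_one (x : Fin (1 + m + 2) → ℝ) (hx : x ≠ 0) :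
    -4 * (x ⬝ᵥ x) < x ⬝ᵥ (signedCompleteMatrix (doubleStar 1 m) *ᵥ x) := by
  set t := ∑ j : Fin (1 + m + 2) with 3 ≤ j.val, x j
  set q := ∑ j : Fin (1 + m + 2) with 3 ≤ j.val, x j ^ 2
  have hsum : ∑ i, x i = x 0 + x 1 + x 2 + t := sum_univ_eq_add_sum_pendant x
  have hnorm : x ⬝ᵥ x = x 0 ^ 2 + x 1 ^ 2 + x 2 ^ 2 + q := by
    simp only [dotProduct, ← sq]
    exact sum_univ_eq_add_sum_pendant _
  have hq : 0 ≤ q := Finset.sum_nonneg fun j _ => sq_nonneg (x j)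
  have hpos : 0 < x ⬝ᵥ x := by simpa using dotProduct_star_self_pos_iff.mpr hx
  rw [dotProduct_signedCompleteMatrix_mulVec, dotProduct_doubleStar_one_adjMatrix_mulVec, hsum,
    hnorm]
  rw [hnorm] at hpos
  linarith [doubleStar_form_pos (t := t) hq hpos]

end DoubleStar

theorem stmt12_general (n : ℕ) :
    -4 < lambdaMin (signedCompleteMatrix (doubleStar 1 (n - 3))) :=
  (isHermitian_signedCompleteMatrix _).lt_lambdaMin
    (neg_four_mul_dotProduct_lt_doubleStar_one (m := n - 3))

/-- For `n ≥ 6`, `λₙ(A((K_n, T⁻_{1,n-3}))) > -4`. -/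
theorem stmt12 (n : ℕ) (hn : 6 ≤ n) :
    -4 < lambdaMin (signedCompleteMatrix (doubleStar 1 (n - 3))) :=
  stmt12_general n
end

section
/- Let Σ=(G,σ) be a connected signed graph on n ≥ 2 vertices. Then λ_n(D^max(Σ)) = λ_n(D^min(Σ)) = −1 if and only if Σ is a balanced signed complete graph (the underlying graph G is K_n and Σ is balanced). -/
/-- The sign of a walk: the product of the signs of its edges. -/
noncomputable def walkSign {V : Type*} {G : SimpleGraph V} (σ : V → V → ℝ)
    {u v : V} (p : G.Walk u v) : ℝ :=
  (p.darts.map fun d => σ d.toProd.1 d.toProd.2).prod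

/-- A signed graph is balanced if every cycle has positive sign. -/
def IsBalanced {V : Type*} (G : SimpleGraph V) (σ : V → V → ℝ) : Prop :=
  ∀ (u : V) (p : G.Walk u u), p.IsCycle → walkSign σ p = 1

/-- `σ_max(u,v)`: the maximum sign of a shortest `u`–`v` path. -/
noncomputable def sigmaMax {V : Type*} (G : SimpleGraph V) (σ : V → V → ℝ) (u v : V) : ℝ :=
  sSup {s : ℝ | ∃ p : G.Walk u v, p.length = G.dist u v ∧ walkSign σ p = s}

/-- `σ_min(u,v)`: the minimum sign of a shortest `u`–`v` path. -/
noncomputable def sigmaMin {V : Type*} (G : SimpleGraph V) (σ : V → V → ℝ) (u v : V) : ℝ :=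
  sInf {s : ℝ | ∃ p : G.Walk u v, p.length = G.dist u v ∧ walkSign σ p = s}

/-- The signed distance matrix `D^max(Σ)`. -/
noncomputable def Dmax {V : Type*} (G : SimpleGraph V) (σ : V → V → ℝ) : Matrix V V ℝ :=
  fun u v => sigmaMax G σ u v * (G.dist u v : ℝ)

/-- The signed distance matrix `D^min(Σ)`. -/
noncomputable def Dmin {V : Type*} (G : SimpleGraph V) (σ : V → V → ℝ) : Matrix V V ℝ :=
  fun u v => sigmaMin G σ u v * (G.dist u v : ℝ)

/-- `G` has diameter `d`. -/
def HasDiameter {V : Type*} (G : SimpleGraph V) (d : ℕ) : Prop :=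
  (∀ u v, G.dist u v ≤ d) ∧ ∃ u v, G.dist u v = d

/-!
The least eigenvalue of a symmetric matrix `M` is the largest `c` for which `M - c • 1` is
positive semidefinite. If `Σ` is complete and balanced, it switches to the all-positive `K_n` by
a `±1` vector `τ`, so both signed distance matrices equal `ττᵀ - I`, whose least eigenvalue is
`-1` (any vector orthogonal to `τ`). Otherwise, positive semidefiniteness of `D^max - λₙ I` on
principal submatrices bounds `λₙ`: a `2 × 2` one at a non-adjacent pair gives
`λₙ ≤ -d(u,v) ≤ -2`, and the `3 × 3` one at a negative triangle of `K_n` gives `λₙ ≤ -2`.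
-/

open Matrix

section LeastEigenvalue

variable {V : Type*} [Fintype V] [DecidableEq V] {M : Matrix V V ℝ}

theorem star_dotProduct_sub_smul_one_mulVec (μ : ℝ) (x : V → ℝ) :
    star x ⬝ᵥ ((M - μ • 1) *ᵥ x) = x ⬝ᵥ (M *ᵥ x) - μ * (x ⬝ᵥ x) := by
  simp [sub_mulVec, dotProduct_sub, smul_mulVec]

theorem lambdaMin_eq_of_posSemidef {μ : ℝ} (hμ : ∃ v ≠ 0, M *ᵥ v = μ • v)
    (hM : (M - μ • 1).PosSemidef) : lambdaMin M = μ := by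
  refine IsLeast.csInf_eq ⟨hμ, ?_⟩
  rintro ν ⟨x, hx, hMx⟩
  have hquad := hM.dotProduct_mulVec_nonneg x
  rw [star_dotProduct_sub_smul_one_mulVec, hMx, dotProduct_smul, smul_eq_mul, ← sub_mul] at hquad
  have hxx : 0 < x ⬝ᵥ x := by simpa using dotProduct_star_self_pos_iff.mpr hx
  exact sub_nonneg.mp (nonneg_of_mul_nonneg_left hquad hxx)

theorem exists_eigenvalue_posSemidef_sub [Nonempty V] (hM : M.IsHermitian) :
    ∃ μ : ℝ, (∃ v ≠ 0, M *ᵥ v = μ • v) ∧ (M - μ • 1).PosSemidef := by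
  set T := M.toEuclideanLin
  set μ := ⨅ y : {y : EuclideanSpace ℝ V // y ≠ 0}, T.toContinuousLinearMap.rayleighQuotient y
  obtain ⟨v, hv⟩ : ∃ v, Module.End.HasEigenvector T μ v :=
    (isSymmetric_toEuclideanLin_iff.mpr hM).hasEigenvalue_iInf_of_finiteDimensional
      |>.exists_hasEigenvector
  refine ⟨μ, ⟨v.ofLp, by simpa using hv.2, congrArg WithLp.ofLp hv.apply_eq_smul⟩,
    .of_dotProduct_mulVec_nonneg (hM.sub (isHermitian_one.smul (.all μ))) fun x => ?_⟩
  rcases eq_or_ne x 0 with rfl | hx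
  · simp
  have hy : WithLp.toLp 2 x ≠ 0 := by simpa using hx
  have hbdd : BddBelow (Set.range fun y : {y : EuclideanSpace ℝ V // y ≠ 0} =>
      T.toContinuousLinearMap.rayleighQuotient y) := ⟨-‖T.toContinuousLinearMap‖, by
    rintro _ ⟨y, rfl⟩
    exact neg_le_of_abs_le (T.toContinuousLinearMap.rayleighQuotient_le_norm y)⟩
  have hle : μ ≤ T.toContinuousLinearMap.rayleighQuotient (WithLp.toLp 2 x) :=
    ciInf_le hbdd ⟨WithLp.toLp 2 x, hy⟩
  have hnorm : ‖WithLp.toLp 2 x‖ ^ 2 = x ⬝ᵥ x := by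
    rw [← real_inner_self_eq_norm_sq, EuclideanSpace.inner_toLp_toLp, star_trivial]
  have hxx : 0 < x ⬝ᵥ x := by simpa using dotProduct_star_self_pos_iff.mpr hx
  simp only [ContinuousLinearMap.rayleighQuotient, ContinuousLinearMap.reApplyInnerSelf_apply,
    hnorm, le_div_iff₀ hxx] at hle
  rw [star_dotProduct_sub_smul_one_mulVec, sub_nonneg]
  simpa [T, EuclideanSpace.inner_toLp_toLp] using hle

theorem posSemidef_sub_lambdaMin_smul_one [Nonempty V] (hM : M.IsHermitian) :
    (M - lambdaMin M • 1).PosSemidef := by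
  obtain ⟨μ, hμ, hpsd⟩ := exists_eigenvalue_posSemidef_sub hM
  rwa [lambdaMin_eq_of_posSemidef hμ hpsd]

theorem lambdaMin_le_neg_mul_apply [Nonempty V] (hM : M.IsHermitian) {u v : V} (huv : u ≠ v)
    (hu : M u u = 0) (hv : M v v = 0) {s : ℝ} (hs : s * s = 1) :
    lambdaMin M ≤ -(s * M u v) := by
  have hquad := ((posSemidef_sub_lambdaMin_smul_one hM).submatrix ![u, v]).dotProduct_mulVec_nonneg
    ![1, -s]
  have hvu : M v u = M u v := hM.apply u v
  simp only [dotProduct, Pi.star_apply, star_trivial, mulVec, submatrix_apply, Matrix.sub_apply,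
    Matrix.smul_apply, one_apply, smul_eq_mul, mul_ite, mul_one, mul_zero, Fin.sum_univ_two,
    cons_val_zero, cons_val_one, cons_val_fin_one, mul_neg, hu, ↓reduceIte, zero_sub, huv,
    sub_zero, one_mul, hvu, huv.symm, hv, neg_mul, neg_neg, le_add_neg_iff_add_le, zero_add] at hquad
  linear_combination (hquad - lambdaMin M * hs) / 2

theorem lambdaMin_le_neg_two_of_triangle [Nonempty V] (hM : M.IsHermitian) {a b c : V}
    (hab : a ≠ b) (hbc : b ≠ c) (hca : c ≠ a) (ha : M a a = 0) (hb : M b b = 0) (hc : M c c = 0)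
    (hab1 : M a b * M a b = 1) (hca1 : M c a * M c a = 1) (hneg : M a b * M b c * M c a = -1) :
    lambdaMin M ≤ -2 := by
  have hquad :=
    ((posSemidef_sub_lambdaMin_smul_one hM).submatrix ![a, b, c]).dotProduct_mulVec_nonneg
      ![1, -M a b, -M c a]
  have hba : M b a = M a b := hM.apply a b
  have hcb : M c b = M b c := hM.apply b c
  have hac : M a c = M c a := hM.apply c a
  simp only [dotProduct, Pi.star_apply, star_trivial, mulVec, submatrix_apply, Matrix.sub_apply,
    Matrix.smul_apply, one_apply, smul_eq_mul, mul_ite, mul_one, mul_zero, Fin.sum_univ_three,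
    cons_val_zero, cons_val_one, mul_neg, cons_val, ha, ↓reduceIte, zero_sub, hab, sub_zero, hac,
    hca.symm, one_mul, hba, hab.symm, hb, neg_mul, neg_neg, hbc, hca, hcb, hbc.symm, hc,
    le_add_neg_iff_add_le, zero_add] at hquad
  linear_combination (hquad - (2 + lambdaMin M) * (hab1 + hca1) + 2 * hneg) / 3

theorem lambdaMin_vecMulVec_self_sub_one [Nontrivial V] (w : V → ℝ) :
    lambdaMin (vecMulVec w w - 1) = -1 := by
  obtain ⟨x, hx, hxw⟩ := exists_ne_zero_dotProduct_eq_zero w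
  refine lambdaMin_eq_of_posSemidef ⟨x, hx, ?_⟩ ?_
  · simp [sub_mulVec, vecMulVec_mulVec, dotProduct_comm w, hxw]
  · simpa using posSemidef_vecMulVec_self_star w

end LeastEigenvalue

open SimpleGraph

section WalkSign

variable {V : Type*} {G : SimpleGraph V} {σ : V → V → ℝ}

theorem EdgeSigns.mul_self (hσ : EdgeSigns G σ) {u v : V} (h : G.Adj u v) : σ u v * σ u v = 1 :=
  mul_self_eq_one_iff.mpr (hσ.2 u v h)

@[simp]
theorem walkSign_nil {u : V} : walkSign σ (Walk.nil : G.Walk u u) = 1 := by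
  simp [walkSign]

@[simp]
theorem walkSign_cons {u v w : V} (h : G.Adj u v) (p : G.Walk v w) :
    walkSign σ (Walk.cons h p) = σ u v * walkSign σ p := by
  simp [walkSign]

theorem walkSign_mul_self (hσ : EdgeSigns G σ) {u v : V} (p : G.Walk u v) :
    walkSign σ p * walkSign σ p = 1 := by
  induction p with
  | nil => simp
  | @cons a b _ h p ih =>
    rw [walkSign_cons]
    linear_combination σ a b * σ a b * ih + hσ.mul_self h

theorem walkSign_reverse (hsymm : ∀ u v, σ u v = σ v u) {u v : V} (p : G.Walk u v) :
    walkSign σ p.reverse = walkSign σ p := by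
  simp only [walkSign, Walk.darts_reverse, List.map_reverse, List.prod_reverse, List.map_map]
  exact congrArg List.prod (List.map_congr_left fun d _ => hsymm _ _)

theorem walkSign_eq_mul_of_switching {τ : V → ℝ} (hτ : ∀ a, τ a * τ a = 1)
    (hστ : ∀ a b, G.Adj a b → σ a b = τ a * τ b) {u v : V} (p : G.Walk u v) :
    walkSign σ p = τ u * τ v := by
  induction p with
  | nil => simp [hτ]
  | @cons a b c h p ih =>
    rw [walkSign_cons, ih, hστ a b h]
    linear_combination τ a * τ c * hτ b

end WalkSign

section ShortestPathSigns

variable {V : Type*} {G : SimpleGraph V} {σ : V → V → ℝ}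

def shortestPathSigns (G : SimpleGraph V) (σ : V → V → ℝ) (u v : V) : Set ℝ :=
  {s | ∃ p : G.Walk u v, p.length = G.dist u v ∧ walkSign σ p = s}

theorem sigmaMax_eq_sSup (u v : V) : sigmaMax G σ u v = sSup (shortestPathSigns G σ u v) := rfl

theorem sigmaMin_eq_sInf (u v : V) : sigmaMin G σ u v = sInf (shortestPathSigns G σ u v) := rfl

theorem shortestPathSigns_nonempty {u v : V} (h : G.Reachable u v) :
    (shortestPathSigns G σ u v).Nonempty :=
  let ⟨p, hp⟩ := h.exists_walk_length_eq_dist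
  ⟨_, p, hp, rfl⟩

theorem shortestPathSigns_finite (hσ : EdgeSigns G σ) (u v : V) :
    (shortestPathSigns G σ u v).Finite := by
  refine (Set.toFinite {1, -1}).subset ?_
  rintro _ ⟨p, -, rfl⟩
  exact mul_self_eq_one_iff.mp (walkSign_mul_self hσ p)

theorem shortestPathSigns_comm (hsymm : ∀ u v, σ u v = σ v u) (u v : V) :
    shortestPathSigns G σ u v = shortestPathSigns G σ v u := by
  have key : ∀ u v, shortestPathSigns G σ u v ⊆ shortestPathSigns G σ v u := by
    rintro u v _ ⟨p, hp, rfl⟩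
    exact ⟨p.reverse, by rw [Walk.length_reverse, hp, dist_comm], walkSign_reverse hsymm p⟩
  exact (key u v).antisymm (key v u)

theorem shortestPathSigns_of_adj {u v : V} (h : G.Adj u v) :
    shortestPathSigns G σ u v = {σ u v} := by
  refine Set.eq_singleton_iff_unique_mem.mpr ⟨⟨h.toWalk, by simp [dist_eq_one_iff_adj.mpr h],
    by simp⟩, ?_⟩
  rintro _ ⟨p, hp, rfl⟩
  rw [dist_eq_one_iff_adj.mpr h] at hp
  cases p with
  | nil => simp at hp
  | cons h' q => cases q with
    | nil => simp
    | cons _ _ => simp at hp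

theorem sigmaMax_mul_self (hσ : EdgeSigns G σ) {u v : V} (h : G.Reachable u v) :
    sigmaMax G σ u v * sigmaMax G σ u v = 1 := by
  obtain ⟨p, -, hp⟩ := (shortestPathSigns_nonempty h).csSup_mem (shortestPathSigns_finite hσ u v)
  rw [sigmaMax_eq_sSup, ← hp]
  exact walkSign_mul_self hσ p

theorem sigmaMax_comm (hsymm : ∀ u v, σ u v = σ v u) (u v : V) :
    sigmaMax G σ u v = sigmaMax G σ v u := by
  rw [sigmaMax_eq_sSup, sigmaMax_eq_sSup, shortestPathSigns_comm hsymm]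

theorem sigmaMax_of_adj {u v : V} (h : G.Adj u v) : sigmaMax G σ u v = σ u v := by
  rw [sigmaMax_eq_sSup, shortestPathSigns_of_adj h, csSup_singleton]

theorem sigmaMin_of_adj {u v : V} (h : G.Adj u v) : sigmaMin G σ u v = σ u v := by
  rw [sigmaMin_eq_sInf, shortestPathSigns_of_adj h, csInf_singleton]

end ShortestPathSigns

section SignedDistanceMatrix

variable {V : Type*} {G : SimpleGraph V} {σ : V → V → ℝ}

@[simp]
theorem Dmax_self (u : V) : Dmax G σ u u = 0 := by
  simp [Dmax]

@[simp]
theorem Dmin_self (u : V) : Dmin G σ u u = 0 := by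
  simp [Dmin]

theorem Dmax_of_adj {u v : V} (h : G.Adj u v) : Dmax G σ u v = σ u v := by
  simp [Dmax, sigmaMax_of_adj h, dist_eq_one_iff_adj.mpr h]

theorem Dmin_of_adj {u v : V} (h : G.Adj u v) : Dmin G σ u v = σ u v := by
  simp [Dmin, sigmaMin_of_adj h, dist_eq_one_iff_adj.mpr h]

theorem isHermitian_Dmax (hsymm : ∀ u v, σ u v = σ v u) : (Dmax G σ).IsHermitian := by
  ext u v
  simp [Dmax, sigmaMax_comm hsymm v u, dist_comm]

theorem lambdaMin_Dmax_le_neg_dist [Fintype V] [DecidableEq V] (hG : G.Connected)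
    (hσ : EdgeSigns G σ) {u v : V} (huv : u ≠ v) : lambdaMin (Dmax G σ) ≤ -G.dist u v := by
  have : Nonempty V := ⟨u⟩
  have hs := sigmaMax_mul_self hσ (hG u v)
  have h := lambdaMin_le_neg_mul_apply (isHermitian_Dmax (G := G) hσ.1) huv (Dmax_self u)
    (Dmax_self v) hs
  rwa [Dmax, ← mul_assoc, hs, one_mul] at h

theorem eq_vecMulVec_self_sub_one [DecidableEq V] {M : Matrix V V ℝ} {τ : V → ℝ}
    (hτ : ∀ a, τ a * τ a = 1) (hdiag : ∀ a, M a a = 0) (hoff : ∀ a b, a ≠ b → M a b = τ a * τ b) :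
    M = vecMulVec τ τ - 1 := by
  ext a b
  rcases eq_or_ne a b with rfl | hab
  · simp [hdiag, vecMulVec_apply, hτ]
  · simp [hoff a b hab, vecMulVec_apply, hab]

end SignedDistanceMatrix

section Balance

variable {V : Type*} {G : SimpleGraph V} {σ : V → V → ℝ}

theorem IsBalanced.triangle (hB : IsBalanced G σ) {a b c : V} (hab : G.Adj a b)
    (hbc : G.Adj b c) (hca : G.Adj c a) : σ a b * σ b c * σ c a = 1 := by
  have hcycle : (Walk.cons hab (Walk.cons hbc (Walk.cons hca Walk.nil))).IsCycle := by
    simp [Walk.cons_isCycle_iff, hab.ne, hbc.ne, hca.ne, hab.ne.symm, hca.ne.symm]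
  simpa [mul_assoc] using hB a _ hcycle

theorem isBalanced_of_switching {τ : V → ℝ} (hτ : ∀ a, τ a * τ a = 1)
    (hστ : ∀ a b, G.Adj a b → σ a b = τ a * τ b) : IsBalanced G σ := fun u p _ => by
  rw [walkSign_eq_mul_of_switching hτ hστ p, hτ]

theorem exists_switching_of_triangles [Nonempty V] (hσ : EdgeSigns ⊤ σ)
    (htri : ∀ a b c : V, a ≠ b → b ≠ c → c ≠ a → σ a b * σ b c * σ c a = 1) :
    ∃ τ : V → ℝ, (∀ a, τ a * τ a = 1) ∧ ∀ a b, a ≠ b → σ a b = τ a * τ b := by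
  classical
  obtain ⟨v₀⟩ := ‹Nonempty V›
  have hsq : ∀ a, a ≠ v₀ → σ v₀ a * σ v₀ a = 1 := fun a ha => hσ.mul_self ha.symm
  -- switching at the neighbours of `v₀` makes every edge at `v₀` positive
  refine ⟨Function.update (σ v₀) v₀ 1, fun a => ?_, fun a b hab => ?_⟩
  · rcases eq_or_ne a v₀ with rfl | ha
    · simp
    · simpa [ha] using hsq a ha
  rcases eq_or_ne a v₀ with rfl | ha
  · simp [hab.symm]
  rcases eq_or_ne b v₀ with rfl | hb
  · simp [ha, hσ.1 a b]
  simp only [Function.update_of_ne ha, Function.update_of_ne hb]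
  have h := htri v₀ a b ha.symm hab hb
  rw [hσ.1 b v₀] at h
  linear_combination σ v₀ a * σ v₀ b * h - σ a b * σ v₀ b * σ v₀ b * hsq a ha - σ a b * hsq b hb

theorem isBalanced_top_iff (hσ : EdgeSigns ⊤ σ) :
    IsBalanced ⊤ σ ↔ ∀ a b c : V, a ≠ b → b ≠ c → c ≠ a → σ a b * σ b c * σ c a = 1 := by
  refine ⟨fun hB a b c hab hbc hca => hB.triangle hab hbc hca, fun htri u => ?_⟩
  have : Nonempty V := ⟨u⟩
  obtain ⟨τ, hτ, hστ⟩ := exists_switching_of_triangles hσ htri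
  exact isBalanced_of_switching hτ hστ u

theorem lambdaMin_Dmax_top_le_neg_two [Fintype V] [DecidableEq V] (hσ : EdgeSigns ⊤ σ)
    (hB : ¬IsBalanced ⊤ σ) : lambdaMin (Dmax ⊤ σ) ≤ -2 := by
  obtain ⟨a, b, c, hab, hbc, hca, hne⟩ : ∃ a b c : V, a ≠ b ∧ b ≠ c ∧ c ≠ a ∧
      σ a b * σ b c * σ c a ≠ 1 := by
    simpa [isBalanced_top_iff hσ] using hB
  have : Nonempty V := ⟨a⟩
  have hneg : σ a b * σ b c * σ c a = -1 := by
    refine (mul_self_eq_one_iff.mp ?_).resolve_left hne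
    linear_combination (σ b c * σ b c * σ c a * σ c a) * hσ.mul_self hab +
      σ c a * σ c a * hσ.mul_self hbc + hσ.mul_self hca
  have hD : ∀ {u v : V}, u ≠ v → Dmax ⊤ σ u v = σ u v := fun h => Dmax_of_adj h
  refine lambdaMin_le_neg_two_of_triangle (isHermitian_Dmax hσ.1) hab hbc hca
    (Dmax_self a) (Dmax_self b) (Dmax_self c) ?_ ?_ ?_ <;>
    simp only [hD hab, hD hbc, hD hca, hσ.mul_self hab, hσ.mul_self hca, hneg]

end Balance

/-- For a connected signed graph `Σ` on `n ≥ 2` vertices,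
`λₙ(D^max(Σ)) = λₙ(D^min(Σ)) = -1` iff `Σ` is a balanced signed complete graph. -/
theorem stmt14 (n : ℕ) (hn : 2 ≤ n) (G : SimpleGraph (Fin n)) (σ : Fin n → Fin n → ℝ)
    (hG : G.Connected) (hσ : EdgeSigns G σ) :
    (lambdaMin (Dmax G σ) = -1 ∧ lambdaMin (Dmin G σ) = -1) ↔
    (G = ⊤ ∧ IsBalanced G σ) := by
  constructor
  · rintro ⟨hmax, -⟩
    obtain rfl : G = ⊤ := by
      by_contra hne
      obtain ⟨u, v, huv, hnadj⟩ := ne_top_iff_exists_not_adj.mp hne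
      have hdist : (2 : ℝ) ≤ G.dist u v := by
        exact_mod_cast hG.one_lt_dist_of_ne_of_not_adj huv hnadj
      linarith [lambdaMin_Dmax_le_neg_dist hG hσ huv]
    exact ⟨rfl, by_contra fun hB => by linarith [lambdaMin_Dmax_top_le_neg_two hσ hB]⟩
  · rintro ⟨rfl, hB⟩
    have : Nontrivial (Fin n) := Fin.nontrivial_iff_two_le.mpr hn
    obtain ⟨τ, hτ, hστ⟩ := exists_switching_of_triangles hσ ((isBalanced_top_iff hσ).mp hB)
    have hDmax : Dmax ⊤ σ = vecMulVec τ τ - 1 :=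
      eq_vecMulVec_self_sub_one hτ Dmax_self fun a b hab => (Dmax_of_adj hab).trans (hστ a b hab)
    have hDmin : Dmin ⊤ σ = vecMulVec τ τ - 1 :=
      eq_vecMulVec_self_sub_one hτ Dmin_self fun a b hab => (Dmin_of_adj hab).trans (hστ a b hab)
    rw [hDmax, hDmin, lambdaMin_vecMulVec_self_sub_one]
    exact ⟨rfl, rfl⟩
end
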